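/- arXiv:2604.24691 — 4 statements merged into one kernel-verified Lean document; each statement's English description precedes it below -/
import Mathlib

section
/- For n×n real positive definite symmetric matrices W and Q, the matrix Y := W^{1/2} (W^{1/2} Q W^{1/2})^{-1/2} W^{1/2} is positive definite and satisfies Y Q Y = W. -/
/-!
With `S = W^{1/2}` and `T = (S Q S)^{1/2}`, the matrix `Y = S T⁻¹ S` is a congruence of the
positive definite `T⁻¹` by the invertible symmetric `S`, and
`Y Q Y = S T⁻¹ (S Q S) T⁻¹ S = S T⁻¹ T² T⁻¹ S = S² = W`.
-/

open Matrix

namespace Matrix.PosSemidef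

open scoped ComplexOrder

/-- The positive semidefinite square root of a positive semidefinite matrix
(the definition removed from Mathlib, restored verbatim). -/
noncomputable def sqrt {n 𝕜 : Type*} [Fintype n] [RCLike 𝕜] [DecidableEq n]
    {A : Matrix n n 𝕜} (hA : A.PosSemidef) : Matrix n n 𝕜 :=
  hA.1.eigenvectorUnitary.1 * diagonal ((↑) ∘ (fun x => Real.sqrt x) ∘ hA.1.eigenvalues) *
    (star hA.1.eigenvectorUnitary : Matrix n n 𝕜)

variable {n 𝕜 : Type*} [Fintype n] [RCLike 𝕜] [DecidableEq n] {A : Matrix n n 𝕜}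

lemma posSemidef_sqrt (hA : A.PosSemidef) : hA.sqrt.PosSemidef := by
  refine PosSemidef.mul_mul_conjTranspose_same (posSemidef_diagonal_iff.mpr fun i ↦ ?_) _
  exact RCLike.ofReal_nonneg.mpr (Real.sqrt_nonneg _)

lemma sqrt_mul_self (hA : A.PosSemidef) : hA.sqrt * hA.sqrt = A := by
  set U : Matrix n n 𝕜 := (hA.1.eigenvectorUnitary : Matrix n n 𝕜)
  set D := diagonal (((↑) : ℝ → 𝕜) ∘ (fun x => Real.sqrt x) ∘ hA.1.eigenvalues)
  have hU : star U * U = 1 := Unitary.coe_star_mul_self _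
  have hD : D * D = diagonal (((↑) : ℝ → 𝕜) ∘ hA.1.eigenvalues) := by
    rw [diagonal_mul_diagonal]
    congr 1
    funext i
    simp only [Function.comp_apply, ← RCLike.ofReal_mul,
      Real.mul_self_sqrt (hA.eigenvalues_nonneg i)]
  conv_rhs => rw [hA.1.spectral_theorem, Unitary.conjStarAlgAut_apply]
  calc hA.sqrt * hA.sqrt = U * (D * (star U * U) * D) * star U := by
        simp only [sqrt, U, D, Matrix.mul_assoc]
    _ = _ := by rw [hU, Matrix.mul_one, hD]

lemma isUnit_sqrt (hA : A.PosSemidef) (hA_unit : IsUnit A) : IsUnit hA.sqrt :=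
  isUnit_of_mul_isUnit_left (hA.sqrt_mul_self ▸ hA_unit)

lemma posDef_sqrt (hA : A.PosSemidef) (hA_unit : IsUnit A) : hA.sqrt.PosDef :=
  hA.posSemidef_sqrt.posDef_iff_isUnit.mpr (hA.isUnit_sqrt hA_unit)

end Matrix.PosSemidef

lemma Matrix.PosDef.mul_mul_same_of_isHermitian {n R : Type*} [Fintype n] [DecidableEq n]
    [Ring R] [PartialOrder R] [StarRing R] {A S : Matrix n n R} (hA : A.PosDef)
    (hS : S.IsHermitian) (hS_unit : IsUnit S) : (S * A * S).PosDef := by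
  simpa only [star_eq_conjTranspose, hS.eq] using
    (IsUnit.posDef_star_left_conjugate_iff hS_unit).mpr hA

lemma Matrix.mul_nonsing_inv_mul_conj_eq {n R : Type*} [Fintype n] [DecidableEq n] [CommRing R]
    {S Q T : Matrix n n R} (hT : IsUnit T) (hTT : T * T = S * Q * S) :
    S * T⁻¹ * S * Q * (S * T⁻¹ * S) = S * S := by
  have hTdet : IsUnit T.det := (isUnit_iff_isUnit_det T).mp hT
  calc S * T⁻¹ * S * Q * (S * T⁻¹ * S) = S * (T⁻¹ * (T * T) * T⁻¹) * S := by
        rw [hTT]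
        simp only [Matrix.mul_assoc]
    _ = S * S := by
      rw [← Matrix.mul_assoc T⁻¹, nonsing_inv_mul _ hTdet, Matrix.one_mul,
        mul_nonsing_inv _ hTdet, Matrix.mul_one]

/-- For n×n real positive definite symmetric matrices `W` and `Q`, the matrix
`Y := W^{1/2} (W^{1/2} Q W^{1/2})^{-1/2} W^{1/2}` is positive definite and satisfies
`Y Q Y = W`. -/
theorem stmt0 {n : ℕ} (W Q : Matrix (Fin n) (Fin n) ℝ)
    (hW : W.PosDef) (hQ : Q.PosDef)
    (h : (hW.posSemidef.sqrt * Q * hW.posSemidef.sqrt).PosSemidef) :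
    (hW.posSemidef.sqrt * h.sqrt⁻¹ * hW.posSemidef.sqrt).PosDef ∧
      (hW.posSemidef.sqrt * h.sqrt⁻¹ * hW.posSemidef.sqrt) * Q *
        (hW.posSemidef.sqrt * h.sqrt⁻¹ * hW.posSemidef.sqrt) = W := by
  set S := hW.posSemidef.sqrt
  have hS_herm : S.IsHermitian := hW.posSemidef.posSemidef_sqrt.isHermitian
  have hS_unit : IsUnit S := hW.posSemidef.isUnit_sqrt hW.isUnit
  have hSQS : (S * Q * S).PosDef := hQ.mul_mul_same_of_isHermitian hS_herm hS_unit
  have hT : h.sqrt.PosDef := h.posDef_sqrt hSQS.isUnit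
  refine ⟨hT.inv.mul_mul_same_of_isHermitian hS_herm hS_unit, ?_⟩
  rw [mul_nonsing_inv_mul_conj_eq hT.isUnit h.sqrt_mul_self, hW.posSemidef.sqrt_mul_self]
end

section
/- Suppose every matrix in GL⁺(n,ℝ) can be written as a product of five real symmetric positive definite matrices. Then for any matrices M, M₁, M₂, M₃, M₄ ∈ GL⁺(n,ℝ), there exist real symmetric positive definite matrices Q̄₁,…,Q̄₅ such that M = Q̄₅ M₄ Q̄₄ M₃ Q̄₃ M₂ Q̄₂ M₁ Q̄₁. -/
/-!
Congruence `P ↦ X P Xᵀ` by an invertible `X` permutes the positive definite matrices, so each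
`P₄, …, P₁` in a Ballantine factorisation can be rewritten as `Xₖ Qₖ Xₖᵀ`. Choosing `X₄ = M₄` and
`Xₖ = (Xₖ₊₁ᵀ)⁻¹ Mₖ` makes the adjacent factors telescope, `Xₖ₊₁ᵀ Xₖ = Mₖ`, so that
`P₅ P₄ P₃ P₂ P₁ = P₅ M₄ Q₄ M₃ Q₃ M₂ Q₂ M₁ Q₁ X₁ᵀ`. It remains to factor `M X₁ᵀ` instead of `M`.
-/

open Matrix

namespace Matrix

variable {n R : Type*} [Fintype n] [DecidableEq n]

theorem PosDef.exists_eq_mul_mul_star [Ring R] [PartialOrder R] [StarRing R]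
    {P X : Matrix n n R} (hP : P.PosDef) (hX : IsUnit X) :
    ∃ Q : Matrix n n R, Q.PosDef ∧ P = X * Q * star X := by
  lift X to (Matrix n n R)ˣ using hX
  refine ⟨(↑X⁻¹ : Matrix n n R) * P * star (↑X⁻¹ : Matrix n n R),
    (Units.isUnit X⁻¹).posDef_star_right_conjugate_iff.2 hP, ?_⟩
  simp only [mul_assoc, ← star_mul, Units.mul_inv, star_one, mul_one, Units.mul_inv_cancel_left]

theorem PosDef.exists_eq_mul_mul_transpose [CommRing R] [PartialOrder R] [StarRing R]
    [TrivialStar R] {P X : Matrix n n R} (hP : P.PosDef) (hX : IsUnit X.det) :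
    ∃ Q : Matrix n n R, Q.PosDef ∧ P = X * Q * Xᵀ := by
  simpa only [star_eq_conjTranspose, conjTranspose_eq_transpose_of_trivial] using
    hP.exists_eq_mul_mul_star ((isUnit_iff_isUnit_det X).2 hX)

theorem transpose_mul_transpose_inv_mul [CommRing R] {A : Matrix n n R} (hA : IsUnit A.det)
    (B : Matrix n n R) : Aᵀ * ((Aᵀ)⁻¹ * B) = B :=
  mul_nonsing_inv_cancel_left _ B (by rwa [det_transpose])

theorem det_transpose_inv_mul_pos [Field R] [LinearOrder R] [IsStrictOrderedRing R]
    {A B : Matrix n n R} (hA : 0 < A.det) (hB : 0 < B.det) : 0 < ((Aᵀ)⁻¹ * B).det := by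
  rw [det_mul, det_nonsing_inv, det_transpose, Ring.inverse_eq_inv']
  positivity

end Matrix

/-- Assuming Ballantine's theorem (every real matrix with positive determinant is a product of
five symmetric positive definite matrices), for any `M, M₁, M₂, M₃, M₄` with positive
determinant there exist symmetric positive definite `Q̄₁,…,Q̄₅` with
`M = Q̄₅ M₄ Q̄₄ M₃ Q̄₃ M₂ Q̄₂ M₁ Q̄₁`. -/
theorem stmt4 {n : ℕ}
    (ballantine : ∀ M : Matrix (Fin n) (Fin n) ℝ, 0 < M.det →
      ∃ Q₁ Q₂ Q₃ Q₄ Q₅ : Matrix (Fin n) (Fin n) ℝ,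
        Q₁.PosDef ∧ Q₂.PosDef ∧ Q₃.PosDef ∧ Q₄.PosDef ∧ Q₅.PosDef ∧
          M = Q₅ * Q₄ * Q₃ * Q₂ * Q₁)
    (M M₁ M₂ M₃ M₄ : Matrix (Fin n) (Fin n) ℝ)
    (hM : 0 < M.det) (h1 : 0 < M₁.det) (h2 : 0 < M₂.det) (h3 : 0 < M₃.det)
    (h4 : 0 < M₄.det) :
    ∃ Q₁ Q₂ Q₃ Q₄ Q₅ : Matrix (Fin n) (Fin n) ℝ,
      Q₁.PosDef ∧ Q₂.PosDef ∧ Q₃.PosDef ∧ Q₄.PosDef ∧ Q₅.PosDef ∧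
        M = Q₅ * M₄ * Q₄ * M₃ * Q₃ * M₂ * Q₂ * M₁ * Q₁ := by
  have hX₃ := det_transpose_inv_mul_pos h4 h3
  have hX₂ := det_transpose_inv_mul_pos hX₃ h2
  have hX₁ := det_transpose_inv_mul_pos hX₂ h1
  set X₃ := (M₄ᵀ)⁻¹ * M₃
  set X₂ := (X₃ᵀ)⁻¹ * M₂
  set X₁ := (X₂ᵀ)⁻¹ * M₁
  obtain ⟨P₁, P₂, P₃, P₄, Q₅, hP₁, hP₂, hP₃, hP₄, hQ₅, hP⟩ :=
    ballantine (M * X₁ᵀ) (by rw [det_mul, det_transpose]; positivity)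
  obtain ⟨Q₄, hQ₄, rfl⟩ := hP₄.exists_eq_mul_mul_transpose h4.ne'.isUnit
  obtain ⟨Q₃, hQ₃, rfl⟩ := hP₃.exists_eq_mul_mul_transpose hX₃.ne'.isUnit
  obtain ⟨Q₂, hQ₂, rfl⟩ := hP₂.exists_eq_mul_mul_transpose hX₂.ne'.isUnit
  obtain ⟨Q₁, hQ₁, rfl⟩ := hP₁.exists_eq_mul_mul_transpose hX₁.ne'.isUnit
  refine ⟨Q₁, Q₂, Q₃, Q₄, Q₅, hQ₁, hQ₂, hQ₃, hQ₄, hQ₅, ?_⟩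
  have e₃ : M₄ᵀ * X₃ = M₃ := transpose_mul_transpose_inv_mul h4.ne'.isUnit M₃
  have e₂ : X₃ᵀ * X₂ = M₂ := transpose_mul_transpose_inv_mul hX₃.ne'.isUnit M₂
  have e₁ : X₂ᵀ * X₁ = M₁ := transpose_mul_transpose_inv_mul hX₂.ne'.isUnit M₁
  have e₀ : X₁ᵀ * (X₁ᵀ)⁻¹ = 1 := mul_nonsing_inv _ (by rw [det_transpose]; exact hX₁.ne'.isUnit)
  calc M = M * (X₁ᵀ * (X₁ᵀ)⁻¹) := by rw [e₀, mul_one]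
    _ = Q₅ * M₄ * Q₄ * (M₄ᵀ * X₃) * Q₃ * (X₃ᵀ * X₂) * Q₂ * (X₂ᵀ * X₁) * Q₁ * (X₁ᵀ * (X₁ᵀ)⁻¹) := by
      rw [← mul_assoc M, hP]
      simp only [mul_assoc]
    _ = Q₅ * M₄ * Q₄ * M₃ * Q₃ * M₂ * Q₂ * M₁ * Q₁ := by rw [e₃, e₂, e₁, e₀, mul_one]
end

section
/- Let N, Q ∈ ℝ^{n×n} with N positive semidefinite and Q positive definite, and let P_N denote the orthogonal projection onto ker N. Then the set {Σ ≻ 0 : P_N Σ P_N = P_N Q P_N} equals the set {Σ ≻ 0 : Σ = (I + N Z) Q (I + Zᵀ N) for some Z ∈ ℝ^{n×n}}. -/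
/-!
Write `S = Bᴴ B` and `Q = Cᴴ C` with `C` invertible. The hypothesis `P S P = P Q P` says that
`B P` and `C P` have the same Gram matrix, so some unitary `U` satisfies `U B P = C P`
(an isometry between the ranges, extended to the whole space). Then `M = (C⁻¹ U B)ᴴ` satisfies
`M Q Mᴴ = S` and `P M = P`; the latter puts the range of `M - 1` inside `(ker N)ᗮ = range N`,
so `M = 1 + N Z`. Conversely, `P N = N P = 0` gives `P (1 + N Z) = P`.
-/

open Matrix

/-- `P` is the orthogonal projection onto the kernel of `N`: it is symmetric, idempotent,
and its fixed points are exactly the kernel of `N`. -/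
def IsOrthProjKer {n : ℕ} (N P : Matrix (Fin n) (Fin n) ℝ) : Prop :=
  Pᵀ = P ∧ P * P = P ∧ ∀ x : Fin n → ℝ, P.mulVec x = x ↔ N.mulVec x = 0

open scoped ComplexOrder

theorem LinearMap.exists_linearIsometry_apply_eq_of_norm_eq {𝕜 E V : Type*} [RCLike 𝕜]
    [AddCommGroup E] [Module 𝕜 E] [NormedAddCommGroup V] [InnerProductSpace 𝕜 V]
    [FiniteDimensional 𝕜 V] (f g : E →ₗ[𝕜] V) (h : ∀ x, ‖f x‖ = ‖g x‖) :
    ∃ U : V →ₗᵢ[𝕜] V, ∀ x, U (f x) = g x := by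
  obtain ⟨s, hs⟩ := f.rangeRestrict.exists_rightInverse_of_surjective f.range_rangeRestrict
  have hfs : ∀ y, f (s y) = y := fun y => congrArg Subtype.val (LinearMap.congr_fun hs y)
  have hgs : ∀ x, g (s ⟨f x, mem_range_self f x⟩) = g x := by
    intro x
    rw [← sub_eq_zero, ← map_sub, ← norm_eq_zero, ← h, map_sub, hfs, sub_self, norm_zero]
  let L : range f →ₗᵢ[𝕜] V := ⟨g ∘ₗ s, fun y => by simp [← h, hfs]⟩
  exact ⟨L.extend, fun x => (L.extend_apply ⟨f x, mem_range_self f x⟩).trans (hgs x)⟩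

theorem Matrix.exists_eq_mul_of_forall_exists_mulVec_eq {R m n k : Type*} [CommSemiring R]
    [Fintype k] {N : Matrix m k R} {A : Matrix m n R} (h : ∀ j, ∃ z, N *ᵥ z = Aᵀ j) :
    ∃ Z : Matrix k n R, A = N * Z := by
  choose z hz using h
  refine ⟨(of z)ᵀ, ?_⟩
  ext i j
  exact (congrFun (hz j) i).symm

namespace Matrix

variable {𝕜 m n : Type*} [RCLike 𝕜] [Fintype m] [DecidableEq m] [Fintype n] [DecidableEq n]

theorem inner_toEuclideanLin_self (A : Matrix m n 𝕜) (x : EuclideanSpace 𝕜 n) :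
    inner 𝕜 (toEuclideanLin A x) (toEuclideanLin A x) =
      inner 𝕜 (toEuclideanLin (Aᴴ * A) x) x := by
  rw [toLpLin_mul_same, toEuclideanLin_conjTranspose_eq_adjoint, LinearMap.comp_apply,
    LinearMap.adjoint_inner_left]

theorem exists_mem_unitaryGroup_mul_eq_of_conjTranspose_mul_self_eq {A B : Matrix m n 𝕜}
    (h : Aᴴ * A = Bᴴ * B) : ∃ U ∈ unitaryGroup m 𝕜, U * A = B := by
  have hnorm (x : EuclideanSpace 𝕜 n) : ‖toEuclideanLin A x‖ = ‖toEuclideanLin B x‖ := by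
    rw [@norm_eq_sqrt_re_inner 𝕜, @norm_eq_sqrt_re_inner 𝕜, inner_toEuclideanLin_self, h,
      ← inner_toEuclideanLin_self]
  obtain ⟨U, hU⟩ := (toEuclideanLin A).exists_linearIsometry_apply_eq_of_norm_eq _ hnorm
  refine ⟨toEuclideanLin.symm U.toLinearMap, ?_, toEuclideanLin.injective ?_⟩
  · rw [mem_unitaryGroup_iff', star_eq_conjTranspose]
    apply toEuclideanLin.injective
    simp [toEuclideanLin_conjTranspose_eq_adjoint]
  · ext1 x
    simp [hU]

open scoped MatrixOrder in
theorem exists_mul_mul_conjTranspose_eq_of_mul_mul_eq {S Q P : Matrix n n 𝕜} (hS : S.PosSemidef)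
    (hQ : Q.PosDef) (hP : P.IsHermitian) (h : P * S * P = P * Q * P) :
    ∃ M, M * Q * Mᴴ = S ∧ P * M = P := by
  obtain ⟨B, rfl⟩ := CStarAlgebra.nonneg_iff_eq_star_mul_self.mp hS.nonneg
  obtain ⟨C, hC, rfl⟩ :=
    CStarAlgebra.isStrictlyPositive_iff_eq_star_mul_self.mp hQ.isStrictlyPositive
  simp only [star_eq_conjTranspose] at h ⊢
  have hgram : (B * P)ᴴ * (B * P) = (C * P)ᴴ * (C * P) := by
    simpa only [conjTranspose_mul, hP.eq, mul_assoc] using h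
  obtain ⟨U, hU, hUB⟩ := exists_mem_unitaryGroup_mul_eq_of_conjTranspose_mul_self_eq hgram
  rw [mem_unitaryGroup_iff', star_eq_conjTranspose] at hU
  have hdet : IsUnit C.det := (isUnit_iff_isUnit_det C).mp hC
  refine ⟨(C⁻¹ * U * B)ᴴ, ?_, ?_⟩
  · calc (C⁻¹ * U * B)ᴴ * (Cᴴ * C) * (C⁻¹ * U * B)ᴴᴴ
        = Bᴴ * Uᴴ * (C * C⁻¹)ᴴ * (C * C⁻¹) * U * B := by
          simp only [conjTranspose_mul, conjTranspose_conjTranspose, mul_assoc]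
      _ = Bᴴ * B := by
          rw [mul_nonsing_inv C hdet, conjTranspose_one, mul_one, mul_one, mul_assoc Bᴴ, hU,
            mul_one]
  · calc P * (C⁻¹ * U * B)ᴴ = (C⁻¹ * (U * (B * P)))ᴴ := by
          simp only [conjTranspose_mul, hP.eq, mul_assoc]
      _ = P := by
          rw [hUB, ← mul_assoc, nonsing_inv_mul C hdet, one_mul, hP.eq]

theorem IsHermitian.exists_mulVec_eq_of_forall_mulVec_eq_zero {N : Matrix n n 𝕜}
    (hN : N.IsHermitian) {v : n → 𝕜} (hv : ∀ u, N *ᵥ u = 0 → star u ⬝ᵥ v = 0) :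
    ∃ z, N *ᵥ z = v := by
  let T := toEuclideanLin N
  have hrange : LinearMap.range T = (LinearMap.ker T)ᗮ := by
    rw [← (isSymmetric_toEuclideanLin_iff.mpr hN).orthogonal_range,
      Submodule.orthogonal_orthogonal]
  have hv' : WithLp.toLp 2 v ∈ LinearMap.range T := by
    rw [hrange, Submodule.mem_orthogonal]
    intro u hu
    rw [EuclideanSpace.inner_eq_star_dotProduct, dotProduct_comm]
    exact hv _ (congrArg WithLp.ofLp hu)
  obtain ⟨z, hz⟩ := hv'
  exact ⟨WithLp.ofLp z, congrArg WithLp.ofLp hz⟩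

end Matrix

namespace IsOrthProjKer

variable {n : ℕ} {N P : Matrix (Fin n) (Fin n) ℝ}

theorem isHermitian (hP : IsOrthProjKer N P) : P.IsHermitian :=
  isHermitian_iff_isSymm.mpr hP.1

theorem mul_proj_eq_zero (hP : IsOrthProjKer N P) : N * P = 0 := by
  refine toLin'.injective (LinearMap.ext fun x => ?_)
  rw [toLin'_apply, toLin'_apply, ← mulVec_mulVec, zero_mulVec]
  exact (hP.2.2 (P *ᵥ x)).1 (by rw [mulVec_mulVec, hP.2.1])

theorem proj_mul_eq_zero (hN : N.IsHermitian) (hP : IsOrthProjKer N P) : P * N = 0 := by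
  simpa [transpose_mul, hP.1, (isHermitian_iff_isSymm.mp hN).eq] using
    congrArg transpose hP.mul_proj_eq_zero

theorem exists_eq_mul_of_proj_mul_eq_zero (hN : N.IsHermitian) (hP : IsOrthProjKer N P)
    {A : Matrix (Fin n) (Fin n) ℝ} (hA : P * A = 0) : ∃ Z, A = N * Z := by
  refine exists_eq_mul_of_forall_exists_mulVec_eq fun j =>
    hN.exists_mulVec_eq_of_forall_mulVec_eq_zero fun u hu => ?_
  calc star u ⬝ᵥ Aᵀ j = (u ᵥ* Pᵀ) ⬝ᵥ Aᵀ j := by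
        rw [star_trivial, vecMul_transpose, (hP.2.2 u).2 hu]
    _ = u ⬝ᵥ (P * A)ᵀ j := by
        rw [← dotProduct_mulVec, hP.1]
        rfl
    _ = 0 := by rw [hA, transpose_zero]; exact dotProduct_zero u

end IsOrthProjKer

/-- For `N ⪰ 0`, `Q ≻ 0`, and `P` the orthogonal projection onto `ker N`, the set
`{S ≻ 0 : P S P = P Q P}` equals `{S ≻ 0 : S = (I + N Z) Q (I + Zᵀ N) for some Z}`. -/
theorem stmt6 {n : ℕ} (N Q P : Matrix (Fin n) (Fin n) ℝ)
    (hN : N.PosSemidef) (hQ : Q.PosDef) (hP : IsOrthProjKer N P) :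
    {S : Matrix (Fin n) (Fin n) ℝ | S.PosDef ∧ P * S * P = P * Q * P} =
      {S : Matrix (Fin n) (Fin n) ℝ | S.PosDef ∧
        ∃ Z : Matrix (Fin n) (Fin n) ℝ, S = (1 + N * Z) * Q * (1 + Zᵀ * N)} := by
  ext S
  constructor
  · rintro ⟨hS, hPSP⟩
    obtain ⟨M, hMQ, hPM⟩ :=
      exists_mul_mul_conjTranspose_eq_of_mul_mul_eq hS.posSemidef hQ hP.isHermitian hPSP
    obtain ⟨Z, hZ⟩ := hP.exists_eq_mul_of_proj_mul_eq_zero hN.1 (A := M - 1)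
      (by rw [mul_sub, hPM, mul_one, sub_self])
    refine ⟨hS, Z, ?_⟩
    rw [← hMQ, sub_eq_iff_eq_add'.mp hZ, conjTranspose_eq_transpose_of_trivial, transpose_add,
      transpose_one, transpose_mul, (isHermitian_iff_isSymm.mp hN.1).eq]
  · rintro ⟨hS, Z, rfl⟩
    refine ⟨hS, ?_⟩
    calc P * ((1 + N * Z) * Q * (1 + Zᵀ * N)) * P
        = (P + P * N * Z) * Q * (P + Zᵀ * (N * P)) := by noncomm_ring
      _ = P * Q * P := by rw [hP.proj_mul_eq_zero hN.1, hP.mul_proj_eq_zero]; simp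
end

section
/- Let Φ_A ∈ GL(n,ℝ), let G, H ∈ ℝ^{n×n} be positive semidefinite with G = Φ_A H Φ_Aᵀ, let P_G and P_H be the orthogonal projections onto ker G and ker H respectively, and let Σ₀ ≻ 0. Then for any symmetric positive definite Σ, P_G Σ P_G = P_G Φ_A Σ₀ Φ_Aᵀ P_G holds if and only if P_H Φ_A⁻¹ Σ Φ_A⁻ᵀ P_H = P_H Σ₀ P_H. -/
/-!
Write `A = Φ_A`. Since `A` is invertible, `Aᵀ` maps `ker G` into `ker H` and `A⁻ᵀ` maps `ker H`
into `ker G`, so `P_H Aᵀ P_G = Aᵀ P_G` and `P_G A⁻ᵀ P_H = A⁻ᵀ P_H`. Consequently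
`P_G (A M Aᵀ) P_G = (Aᵀ P_G)ᵀ (P_H M P_H) (Aᵀ P_G)` and
`P_H M P_H = (A⁻ᵀ P_H)ᵀ (P_G (A M Aᵀ) P_G) (A⁻ᵀ P_H)`, so each of the two compressions determines
the other. The theorem is the case `M = A⁻¹ Σ A⁻ᵀ`, `K = Σ₀`.
-/

open Matrix

theorem Matrix.transpose_mul_mul_eq_of_mul_eq_self {R m l : Type*} [CommSemiring R]
    [Fintype m] [Fintype l] {Q : Matrix m m R} (hQ : Qᵀ = Q) {Y : Matrix m l R}
    (hY : Q * Y = Y) (M : Matrix m m R) : Yᵀ * M * Y = Yᵀ * (Q * M * Q) * Y := by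
  conv_lhs => rw [← hY]
  rw [transpose_mul, hQ]
  simp only [Matrix.mul_assoc]

namespace IsOrthProjKer

variable {n : ℕ} {N P : Matrix (Fin n) (Fin n) ℝ}

theorem mulVec_mulVec_eq_zero (hP : IsOrthProjKer N P) (x : Fin n → ℝ) :
    N *ᵥ (P *ᵥ x) = 0 :=
  (hP.2.2 _).mp (by rw [mulVec_mulVec, hP.2.1])

theorem mul_eq_self_of_mulVec_eq_zero (hP : IsOrthProjKer N P) {m : Type*} [Fintype m]
    {Y : Matrix (Fin n) m ℝ} (hY : ∀ x, N *ᵥ (Y *ᵥ x) = 0) : P * Y = Y :=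
  ext_iff_mulVec.mpr fun x => by rw [← mulVec_mulVec, (hP.2.2 _).mpr (hY x)]

theorem conj_eq_iff {A H Q : Matrix (Fin n) (Fin n) ℝ} (hA : IsUnit A)
    (hP : IsOrthProjKer (A * H * Aᵀ) P) (hQ : IsOrthProjKer H Q)
    (M K : Matrix (Fin n) (Fin n) ℝ) :
    P * (A * M * Aᵀ) * P = P * (A * K * Aᵀ) * P ↔ Q * M * Q = Q * K * Q := by
  have hdet : IsUnit A.det := (isUnit_iff_isUnit_det A).mp hA
  have hAt : Aᵀ * A⁻¹ᵀ = 1 := by rw [← transpose_mul, nonsing_inv_mul A hdet, transpose_one]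
  have hQP : Q * (Aᵀ * P) = Aᵀ * P := hQ.mul_eq_self_of_mulVec_eq_zero fun x =>
    mulVec_injective_of_isUnit hA <| by
      simpa only [mulVec_mulVec, Matrix.mul_assoc, mulVec_zero] using hP.mulVec_mulVec_eq_zero x
  have hPQ : P * (A⁻¹ᵀ * Q) = A⁻¹ᵀ * Q := hP.mul_eq_self_of_mulVec_eq_zero fun x => by
    rw [mulVec_mulVec, Matrix.mul_assoc, Matrix.mul_assoc, ← Matrix.mul_assoc Aᵀ, hAt,
      Matrix.one_mul, ← mulVec_mulVec, ← mulVec_mulVec, hQ.mulVec_mulVec_eq_zero, mulVec_zero]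
  have compress_P (M : Matrix (Fin n) (Fin n) ℝ) :
      P * (A * M * Aᵀ) * P = (Aᵀ * P)ᵀ * (Q * M * Q) * (Aᵀ * P) := by
    rw [← transpose_mul_mul_eq_of_mul_eq_self hQ.1 hQP, transpose_mul, hP.1, transpose_transpose]
    simp only [Matrix.mul_assoc]
  have compress_Q (M : Matrix (Fin n) (Fin n) ℝ) :
      Q * M * Q = (A⁻¹ᵀ * Q)ᵀ * (P * (A * M * Aᵀ) * P) * (A⁻¹ᵀ * Q) := by
    rw [← transpose_mul_mul_eq_of_mul_eq_self hP.1 hPQ, transpose_mul, hQ.1, transpose_transpose]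
    simp only [Matrix.mul_assoc]
    rw [← Matrix.mul_assoc Aᵀ, hAt, Matrix.one_mul, ← Matrix.mul_assoc A⁻¹, nonsing_inv_mul A hdet,
      Matrix.one_mul]
  constructor
  · intro h
    rw [compress_Q M, compress_Q K, h]
  · intro h
    rw [compress_P M, compress_P K, h]

end IsOrthProjKer

theorem stmt19_general {n : ℕ}
    (PhiA G H PG PH S₀ : Matrix (Fin n) (Fin n) ℝ)
    (hPhiA : IsUnit PhiA)
    (hGH : G = PhiA * H * PhiAᵀ)
    (hPG : IsOrthProjKer G PG) (hPH : IsOrthProjKer H PH) :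
    ∀ S : Matrix (Fin n) (Fin n) ℝ, S.PosDef →
      (PG * S * PG = PG * (PhiA * S₀ * PhiAᵀ) * PG ↔
        PH * (PhiA⁻¹ * S * (PhiA⁻¹)ᵀ) * PH = PH * S₀ * PH) := by
  intro S _
  have hdet : IsUnit PhiA.det := (isUnit_iff_isUnit_det PhiA).mp hPhiA
  have hS : PhiA * (PhiA⁻¹ * S * PhiA⁻¹ᵀ) * PhiAᵀ = S := by
    rw [← Matrix.mul_assoc, ← Matrix.mul_assoc, mul_nonsing_inv PhiA hdet, Matrix.one_mul,
      Matrix.mul_assoc, ← transpose_mul, mul_nonsing_inv PhiA hdet, transpose_one, Matrix.mul_one]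
  rw [hGH] at hPG
  simpa only [hS] using hPG.conj_eq_iff hPhiA hPH (PhiA⁻¹ * S * PhiA⁻¹ᵀ) S₀

/-- For invertible `Φ_A`, `G = Φ_A H Φ_Aᵀ` with `G, H ⪰ 0`, projections `P_G`, `P_H` onto
`ker G` and `ker H`, and `Σ₀ ≻ 0`: a positive definite `Σ` satisfies
`P_G Σ P_G = P_G Φ_A Σ₀ Φ_Aᵀ P_G` iff `P_H Φ_A⁻¹ Σ Φ_A⁻ᵀ P_H = P_H Σ₀ P_H`. -/
theorem stmt19 {n : ℕ}
    (PhiA G H PG PH S₀ : Matrix (Fin n) (Fin n) ℝ)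
    (hPhiA : IsUnit PhiA) (hG : G.PosSemidef) (hH : H.PosSemidef)
    (hGH : G = PhiA * H * PhiAᵀ)
    (hPG : IsOrthProjKer G PG) (hPH : IsOrthProjKer H PH)
    (hS₀ : S₀.PosDef) :
    ∀ S : Matrix (Fin n) (Fin n) ℝ, S.PosDef →
      (PG * S * PG = PG * (PhiA * S₀ * PhiAᵀ) * PG ↔
        PH * (PhiA⁻¹ * S * (PhiA⁻¹)ᵀ) * PH = PH * S₀ * PH) :=
  stmt19_general PhiA G H PG PH S₀ hPhiA hGH hPG hPH
end
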